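/- For q ∈ (0,1), let D_q be the qubit depolarizing channel mapping a 2×2 complex matrix ρ to (1−q)·ρ + q·(Tr ρ)·I₂/2, and define Q(q,α) := (1−q/2)^α·(q/2)^{1−α} + (1−q/2)^{1−α}·(q/2)^α. Then for every α ∈ (0,1), the supremum of D_α(D_q(ρ)‖D_q(σ)) over all pairs (ρ,σ) of density matrices on ℂ² equals (1/(α−1))·log Q(q,α), and this supremum is attained at ρ = |0⟩⟨0| = !![1,0;0,0] and σ = |1⟩⟨1| = !![0,0;0,1] (whose images under D_q are diag(1−q/2, q/2) and diag(q/2, 1−q/2), respectively). -/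

import Mathlib

open Matrix ComplexOrder

/-- Functional calculus for a matrix: apply `f` to the eigenvalues of a Hermitian matrix
(junk value `0` on non-Hermitian input). -/
noncomputable def matFun {n : Type*} [Fintype n] [DecidableEq n] (f : ℝ → ℝ)
    (A : Matrix n n ℂ) : Matrix n n ℂ :=
  if hA : A.IsHermitian then
    (hA.eigenvectorUnitary : Matrix n n ℂ) *
      Matrix.diagonal (fun i => (f (hA.eigenvalues i) : ℂ)) *
      (hA.eigenvectorUnitary : Matrix n n ℂ)ᴴ
  else 0

/-- Real matrix power `A^t` via functional calculus (with `0^t = 0`). -/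
noncomputable def mrpow {n : Type*} [Fintype n] [DecidableEq n]
    (A : Matrix n n ℂ) (t : ℝ) : Matrix n n ℂ :=
  matFun (fun x => x ^ t) A

/-- Matrix logarithm via functional calculus. -/
noncomputable def mlog {n : Type*} [Fintype n] [DecidableEq n]
    (A : Matrix n n ℂ) : Matrix n n ℂ :=
  matFun Real.log A

/-- The quantum Rényi relative entropy `D_α(ρ‖σ) = (1/(α−1))·log Tr(ρ^α σ^{1−α})`. -/
noncomputable def renyiD {n : Type*} [Fintype n] [DecidableEq n]
    (α : ℝ) (ρ σ : Matrix n n ℂ) : ℝ :=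
  (1 / (α - 1)) * Real.log ((mrpow ρ α * mrpow σ (1 - α)).trace.re)

/-- The quantum relative entropy `D(ρ‖σ) = Tr[ρ(log ρ − log σ)]`. -/
noncomputable def qRelEnt {n : Type*} [Fintype n] [DecidableEq n]
    (ρ σ : Matrix n n ℂ) : ℝ :=
  ((ρ * (mlog ρ - mlog σ)).trace).re

/-- A density matrix: positive semidefinite with unit trace. -/
def IsDensity {n : Type*} [Fintype n] (ρ : Matrix n n ℂ) : Prop :=
  ρ.PosSemidef ∧ ρ.trace = 1


/-!
Diagonalise `D_q ρ = U diag(a, 1 - a) U*` and `D_q σ = V diag(b, 1 - b) V*`; the eigenvalues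
`a, b` lie in `[q/2, 1 - q/2]`. With `c = |(U* V)₀₀|²`, the trace `Tr (D_q ρ)^α (D_q σ)^(1-α)` is the
convex combination `c · O(a, b) + (1 - c) · O(a, 1 - b)` of classical binary overlaps
`O(x, y) = x^α y^(1-α) + (1-x)^α (1-y)^(1-α)`. The overlap is concave in each variable separately,
so on the square `[q/2, 1 - q/2]²` it is bounded below by its corner values `1` and `Q(q, α) ≤ 1`.
As `1 / (α - 1) < 0`, the minimal trace gives the maximal `D_α`, and `|0⟩⟨0|, |1⟩⟨1|` reach it.
-/

noncomputable def binaryOverlap (α x y : ℝ) : ℝ :=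
  x ^ α * y ^ (1 - α) + (1 - x) ^ α * (1 - y) ^ (1 - α)

lemma rpow_mul_rpow_add_rpow_mul_rpow_le_add {a b α : ℝ} (ha : 0 ≤ a) (hb : 0 ≤ b)
    (hα₀ : 0 ≤ α) (hα₁ : α ≤ 1) :
    a ^ α * b ^ (1 - α) + a ^ (1 - α) * b ^ α ≤ a + b := by
  have h₁ := Real.geom_mean_le_arith_mean2_weighted hα₀ (sub_nonneg.2 hα₁) ha hb (by ring)
  have h₂ := Real.geom_mean_le_arith_mean2_weighted hα₀ (sub_nonneg.2 hα₁) hb ha (by ring)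
  rw [mul_comm (b ^ α)] at h₂
  linarith

lemma mul_rpow_add_mul_rpow_le_rpow {p s t u v : ℝ} (hp₀ : 0 ≤ p) (hp₁ : p ≤ 1)
    (hs : 0 ≤ s) (ht : 0 ≤ t) (hst : s + t = 1) (hu : 0 ≤ u) (hv : 0 ≤ v) :
    s * u ^ p + t * v ^ p ≤ (s * u + t * v) ^ p :=
  (Real.concaveOn_rpow hp₀ hp₁).2 hu hv hs ht hst

lemma binaryOverlap_le_of_mem_Icc {α a b x y : ℝ} (hα₀ : 0 ≤ α) (hα₁ : α ≤ 1) (hb : 0 ≤ b)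
    (hba : b ≤ a) (hab : a + b = 1) (hx : x ∈ Set.Icc b a) (hy : y ∈ Set.Icc b a) :
    binaryOverlap α a b ≤ binaryOverlap α x y := by
  have ha : 0 ≤ a := hb.trans hba
  have hβ₀ : 0 ≤ 1 - α := sub_nonneg.2 hα₁
  have hβ₁ : 1 - α ≤ 1 := by linarith
  rw [← segment_eq_Icc hba] at hx hy
  obtain ⟨s, s', hs, hs', hss', rfl⟩ := hx
  obtain ⟨t, t', ht, ht', htt', rfl⟩ := hy
  simp only [smul_eq_mul, binaryOverlap]
  rw [show 1 - (s * b + s' * a) = s * a + s' * b by linear_combination -(a + b) * hss' - hab,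
    show 1 - (t * b + t' * a) = t * a + t' * b by linear_combination -(a + b) * htt' - hab,
    show 1 - a = b by linear_combination -hab,
    show 1 - b = a by linear_combination -hab]
  have hbb : b ^ α * b ^ (1 - α) = b := by
    rw [← Real.rpow_add' hb (by norm_num), add_sub_cancel, Real.rpow_one]
  have haa : a ^ α * a ^ (1 - α) = a := by
    rw [← Real.rpow_add' ha (by norm_num), add_sub_cancel, Real.rpow_one]
  have hQ : a ^ α * b ^ (1 - α) + a ^ (1 - α) * b ^ α ≤ 1 :=
    hab ▸ rpow_mul_rpow_add_rpow_mul_rpow_le_add ha hb hα₀ hα₁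
  have hw : (s * t + s' * t') + (s * t' + s' * t) = 1 := by
    linear_combination (t + t') * hss' + htt'
  rw [mul_comm (b ^ α)]
  calc a ^ α * b ^ (1 - α) + a ^ (1 - α) * b ^ α
      ≤ (s * t + s' * t') * 1 + (s * t' + s' * t) * (a ^ α * b ^ (1 - α) + a ^ (1 - α) * b ^ α) := by
        nlinarith [mul_nonneg (add_nonneg (mul_nonneg hs ht) (mul_nonneg hs' ht')) (sub_nonneg.2 hQ)]
    _ = (s * b ^ α + s' * a ^ α) * (t * b ^ (1 - α) + t' * a ^ (1 - α)) +
          (s * a ^ α + s' * b ^ α) * (t * a ^ (1 - α) + t' * b ^ (1 - α)) := by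
        linear_combination -(s * t + s' * t') * (hbb + haa + hab)
    _ ≤ (s * b + s' * a) ^ α * (t * b + t' * a) ^ (1 - α) +
          (s * a + s' * b) ^ α * (t * a + t' * b) ^ (1 - α) := by
        gcongr ?_ * ?_ + ?_ * ?_
        · exact mul_rpow_add_mul_rpow_le_rpow hα₀ hα₁ hs hs' hss' hb ha
        · exact mul_rpow_add_mul_rpow_le_rpow hβ₀ hβ₁ ht ht' htt' hb ha
        · exact mul_rpow_add_mul_rpow_le_rpow hα₀ hα₁ hs hs' hss' ha hb
        · exact mul_rpow_add_mul_rpow_le_rpow hβ₀ hβ₁ ht ht' htt' ha hb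

section Spectral

variable {n : Type*} [Fintype n] [DecidableEq n]

lemma Matrix.IsHermitian.eq_conj_diagonal_eigenvalues {A : Matrix n n ℂ} (hA : A.IsHermitian) :
    A = (hA.eigenvectorUnitary : Matrix n n ℂ) * diagonal (fun i => (hA.eigenvalues i : ℂ)) *
      (hA.eigenvectorUnitary : Matrix n n ℂ)ᴴ := by
  simpa [star_eq_conjTranspose, Function.comp_def] using hA.spectral_theorem

lemma diagonal_comp_mul_eq_mul_diagonal_comp {d e : n → ℝ} {M : Matrix n n ℂ}
    (h : diagonal (fun i => (d i : ℂ)) * M = M * diagonal (fun i => (e i : ℂ))) (f : ℝ → ℝ) :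
    diagonal (fun i => (f (d i) : ℂ)) * M = M * diagonal (fun i => (f (e i) : ℂ)) := by
  ext i j
  have hij := congrFun (congrFun h i) j
  simp only [diagonal_mul, mul_diagonal] at hij ⊢
  rcases eq_or_ne (M i j) 0 with h0 | h0
  · simp [h0]
  · have : d i = e j := by exact_mod_cast mul_right_cancel₀ h0 (hij.trans (mul_comm _ _))
    rw [this, mul_comm]

lemma matFun_conj_diagonal (f : ℝ → ℝ) {W : Matrix n n ℂ} (hW : W ∈ unitaryGroup n ℂ)
    (d : n → ℝ) :
    matFun f (W * diagonal (fun i => (d i : ℂ)) * Wᴴ) =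
      W * diagonal (fun i => (f (d i) : ℂ)) * Wᴴ := by
  have hA : (W * diagonal (fun i => (d i : ℂ)) * Wᴴ).IsHermitian :=
    isHermitian_mul_mul_conjTranspose W
      (isHermitian_diagonal_of_self_adjoint _ (by ext i; simp [Complex.conj_ofReal]))
  rw [matFun, dif_pos hA]
  set U : Matrix n n ℂ := ↑hA.eigenvectorUnitary
  have hU : U ∈ unitaryGroup n ℂ := hA.eigenvectorUnitary.2
  have hUU : Uᴴ * U = 1 := hU.1
  have hUU' : U * Uᴴ = 1 := hU.2
  have hWW : Wᴴ * W = 1 := hW.1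
  have hWW' : W * Wᴴ = 1 := hW.2
  have hspec := hA.eq_conj_diagonal_eigenvalues
  -- `Uᴴ * W` intertwines the two diagonalisations, hence also their images under `f`.
  have hint : diagonal (fun i => (hA.eigenvalues i : ℂ)) * (Uᴴ * W) =
      (Uᴴ * W) * diagonal (fun i => (d i : ℂ)) := by
    calc _ = Uᴴ * (U * diagonal (fun i => (hA.eigenvalues i : ℂ)) * Uᴴ) * W := by
          simp only [← mul_assoc, hUU, one_mul]
      _ = Uᴴ * (W * diagonal (fun i => (d i : ℂ)) * Wᴴ) * W := by rw [← hspec]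
      _ = _ := by simp only [mul_assoc, hWW, mul_one]
  calc U * diagonal (fun i => (f (hA.eigenvalues i) : ℂ)) * Uᴴ
      = U * (diagonal (fun i => (f (hA.eigenvalues i) : ℂ)) * (Uᴴ * W)) * Wᴴ := by
        simp only [mul_assoc, hWW', mul_one]
    _ = U * ((Uᴴ * W) * diagonal (fun i => (f (d i) : ℂ))) * Wᴴ := by
        rw [diagonal_comp_mul_eq_mul_diagonal_comp hint f]
    _ = W * diagonal (fun i => (f (d i) : ℂ)) * Wᴴ := by
        simp only [← mul_assoc, hUU', one_mul]

lemma matFun_diagonal (f : ℝ → ℝ) (d : n → ℝ) :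
    matFun f (diagonal (fun i => (d i : ℂ))) = diagonal (fun i => (f (d i) : ℂ)) := by
  simpa using matFun_conj_diagonal f (one_mem _) d

lemma re_trace_conj_diagonal_mul_conj_diagonal (U V : Matrix n n ℂ) (d e : n → ℝ) :
    ((U * diagonal (fun i => (d i : ℂ)) * Uᴴ) * (V * diagonal (fun i => (e i : ℂ)) * Vᴴ)).trace.re
      = ∑ i, ∑ j, d i * e j * Complex.normSq ((Uᴴ * V) i j) := by
  set M := Uᴴ * V
  have hcycle : ((U * diagonal (fun i => (d i : ℂ)) * Uᴴ) *
      (V * diagonal (fun i => (e i : ℂ)) * Vᴴ)).trace =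
      (diagonal (fun i => (d i : ℂ)) * (M * (diagonal (fun i => (e i : ℂ)) * Mᴴ))).trace := by
    simp only [M, conjTranspose_mul, conjTranspose_conjTranspose, mul_assoc]
    rw [trace_mul_comm U]
    simp only [mul_assoc]
  rw [hcycle, trace, Complex.re_sum]
  refine Finset.sum_congr rfl fun i _ => ?_
  simp only [diag, diagonal_mul]
  rw [mul_apply]
  simp only [diagonal_mul, conjTranspose_apply, Finset.mul_sum, Complex.re_sum]
  refine Finset.sum_congr rfl fun j _ => ?_
  rw [Complex.star_def, mul_left_comm (M i j), Complex.mul_conj, ← mul_assoc]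
  norm_cast

lemma sum_normSq_apply_eq_one {M : Matrix n n ℂ} (hM : M ∈ unitaryGroup n ℂ) (i : n) :
    ∑ j, Complex.normSq (M i j) = 1 := by
  have h := congrFun (congrFun (hM.2 : M * Mᴴ = 1) i) i
  simp only [mul_apply, star_apply, Complex.star_def, Complex.mul_conj, one_apply_eq] at h
  exact_mod_cast h

end Spectral

lemma normSq_apply_fin_two {M : Matrix (Fin 2) (Fin 2) ℂ} (hM : M ∈ unitaryGroup (Fin 2) ℂ) :
    Complex.normSq (M 0 1) = 1 - Complex.normSq (M 0 0) ∧
      Complex.normSq (M 1 0) = 1 - Complex.normSq (M 0 0) ∧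
      Complex.normSq (M 1 1) = Complex.normSq (M 0 0) := by
  have row₀ := sum_normSq_apply_eq_one hM 0
  have row₁ := sum_normSq_apply_eq_one hM 1
  have col₀ := sum_normSq_apply_eq_one (Unitary.star_mem hM) 0
  simp only [Fin.sum_univ_two, star_apply, Complex.star_def, Complex.normSq_conj] at row₀ row₁ col₀
  refine ⟨by linarith, by linarith, by linarith⟩

lemma re_trace_mrpow_conj_mul_mrpow_conj_fin_two {U V : Matrix (Fin 2) (Fin 2) ℂ}
    (hU : U ∈ unitaryGroup (Fin 2) ℂ) (hV : V ∈ unitaryGroup (Fin 2) ℂ) (α a b : ℝ) :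
    (mrpow (U * diagonal (fun i => ((![a, 1 - a] i : ℝ) : ℂ)) * Uᴴ) α *
        mrpow (V * diagonal (fun i => ((![b, 1 - b] i : ℝ) : ℂ)) * Vᴴ) (1 - α)).trace.re =
      Complex.normSq ((Uᴴ * V) 0 0) * binaryOverlap α a b +
        (1 - Complex.normSq ((Uᴴ * V) 0 0)) * binaryOverlap α a (1 - b) := by
  obtain ⟨h01, h10, h11⟩ :=
    normSq_apply_fin_two (M := Uᴴ * V) (mul_mem (Unitary.star_mem hU) hV)
  rw [mrpow, mrpow, matFun_conj_diagonal _ hU, matFun_conj_diagonal _ hV,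
    re_trace_conj_diagonal_mul_conj_diagonal]
  simp only [Fin.sum_univ_two, cons_val_zero, cons_val_one]
  rw [h01, h10, h11, binaryOverlap, binaryOverlap, sub_sub_cancel]
  ring

noncomputable def depolarize (q : ℝ) (ρ : Matrix (Fin 2) (Fin 2) ℂ) : Matrix (Fin 2) (Fin 2) ℂ :=
  ((1 - q : ℝ) : ℂ) • ρ + ((q : ℝ) : ℂ) • (ρ.trace • ((1 / 2 : ℂ) • (1 : Matrix (Fin 2) (Fin 2) ℂ)))

lemma depolarize_conj (q : ℝ) {U : Matrix (Fin 2) (Fin 2) ℂ} (hU : U ∈ unitaryGroup (Fin 2) ℂ)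
    (X : Matrix (Fin 2) (Fin 2) ℂ) :
    depolarize q (U * X * Uᴴ) = U * depolarize q X * Uᴴ := by
  have hUU : Uᴴ * U = 1 := hU.1
  have hUU' : U * Uᴴ = 1 := hU.2
  rw [depolarize, depolarize, trace_mul_cycle, hUU, one_mul, mul_add, add_mul]
  simp only [mul_smul_comm, smul_mul_assoc, mul_one, hUU']

lemma depolarize_diagonal (q : ℝ) {p : Fin 2 → ℝ} (hsum : ∑ i, p i = 1) :
    depolarize q (diagonal fun i => (p i : ℂ)) =
      diagonal fun i => (((1 - q) * p i + q / 2 : ℝ) : ℂ) := by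
  rw [depolarize, trace_diagonal, ← Complex.ofReal_sum, hsum, Complex.ofReal_one, one_smul]
  rw [← diagonal_one, ← diagonal_smul, ← diagonal_smul, ← diagonal_smul, diagonal_add]
  congr 1
  funext i
  simp only [Pi.smul_apply, smul_eq_mul]
  push_cast
  ring

lemma exists_depolarize_eq_conj_diagonal {q : ℝ} (hq₀ : 0 ≤ q) (hq₁ : q ≤ 1)
    {ρ : Matrix (Fin 2) (Fin 2) ℂ} (hρ : IsDensity ρ) :
    ∃ U ∈ unitaryGroup (Fin 2) ℂ, ∃ a ∈ Set.Icc (q / 2) (1 - q / 2),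
      depolarize q ρ = U * diagonal (fun i => ((![a, 1 - a] i : ℝ) : ℂ)) * Uᴴ := by
  obtain ⟨hpsd, htr⟩ := hρ
  have hH := hpsd.isHermitian
  have hev₀ := hpsd.eigenvalues_nonneg 0
  have hev₁ := hpsd.eigenvalues_nonneg 1
  have hsum : ∑ i, hH.eigenvalues i = 1 := by
    simpa [htr] using (congrArg Complex.re hH.trace_eq_sum_eigenvalues).symm
  rw [Fin.sum_univ_two] at hsum
  refine ⟨_, hH.eigenvectorUnitary.2, (1 - q) * hH.eigenvalues 0 + q / 2,
    ⟨by nlinarith, by nlinarith⟩, ?_⟩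
  have hvals : ∀ i, (1 - q) * hH.eigenvalues i + q / 2 =
      ![(1 - q) * hH.eigenvalues 0 + q / 2, 1 - ((1 - q) * hH.eigenvalues 0 + q / 2)] i :=
    Fin.forall_fin_two.2 ⟨rfl, by change _ = 1 - _; linear_combination (1 - q) * hsum⟩
  conv_lhs => rw [hH.eq_conj_diagonal_eigenvalues]
  rw [depolarize_conj q hH.eigenvectorUnitary.2, depolarize_diagonal q (by simpa using hsum)]
  congr
  funext i
  rw [hvals i]

lemma binaryOverlap_le_re_trace_mrpow_depolarize {q α : ℝ} (hq₀ : 0 ≤ q) (hq₁ : q ≤ 1)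
    (hα₀ : 0 ≤ α) (hα₁ : α ≤ 1) {ρ σ : Matrix (Fin 2) (Fin 2) ℂ}
    (hρ : IsDensity ρ) (hσ : IsDensity σ) :
    binaryOverlap α (1 - q / 2) (q / 2) ≤
      (mrpow (depolarize q ρ) α * mrpow (depolarize q σ) (1 - α)).trace.re := by
  obtain ⟨U, hU, a, ha, hρU⟩ := exists_depolarize_eq_conj_diagonal hq₀ hq₁ hρ
  obtain ⟨V, hV, b, hb, hσV⟩ := exists_depolarize_eq_conj_diagonal hq₀ hq₁ hσ
  rw [hρU, hσV, re_trace_mrpow_conj_mul_mrpow_conj_fin_two hU hV]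
  have hc₀ := Complex.normSq_nonneg ((Uᴴ * V) 0 0)
  have hc₁ : 0 ≤ 1 - Complex.normSq ((Uᴴ * V) 0 0) := by
    rw [← (normSq_apply_fin_two (M := Uᴴ * V) (mul_mem (Unitary.star_mem hU) hV)).1]
    exact Complex.normSq_nonneg _
  have hb' : 1 - b ∈ Set.Icc (q / 2) (1 - q / 2) := ⟨by linarith [hb.2], by linarith [hb.1]⟩
  have h₁ := binaryOverlap_le_of_mem_Icc hα₀ hα₁ (by linarith) (by linarith) (by ring) ha hb
  have h₂ := binaryOverlap_le_of_mem_Icc hα₀ hα₁ (by linarith) (by linarith) (by ring) ha hb'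
  nlinarith [mul_le_mul_of_nonneg_left h₁ hc₀, mul_le_mul_of_nonneg_left h₂ hc₁]

lemma isDensity_diagonal {n : Type*} [Fintype n] [DecidableEq n] {p : n → ℝ} (hp : ∀ i, 0 ≤ p i)
    (hsum : ∑ i, p i = 1) : IsDensity (diagonal fun i => (p i : ℂ)) :=
  ⟨posSemidef_diagonal_iff.2 fun i => Complex.zero_le_real.2 (hp i), by
    rw [trace_diagonal, ← Complex.ofReal_sum, hsum, Complex.ofReal_one]⟩

lemma ket₀_eq_diagonal :
    (!![1, 0; 0, 0] : Matrix (Fin 2) (Fin 2) ℂ) = diagonal fun i => ((![1, 0] i : ℝ) : ℂ) := by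
  ext i j; fin_cases i <;> fin_cases j <;> simp

lemma ket₁_eq_diagonal :
    (!![0, 0; 0, 1] : Matrix (Fin 2) (Fin 2) ℂ) = diagonal fun i => ((![0, 1] i : ℝ) : ℂ) := by
  ext i j; fin_cases i <;> fin_cases j <;> simp

lemma re_trace_mrpow_depolarize_ket₀_mul_mrpow_depolarize_ket₁ (q α : ℝ) :
    (mrpow (depolarize q !![1, 0; 0, 0]) α *
        mrpow (depolarize q !![0, 0; 0, 1]) (1 - α)).trace.re =
      binaryOverlap α (1 - q / 2) (q / 2) := by
  rw [ket₀_eq_diagonal, ket₁_eq_diagonal, depolarize_diagonal q (by simp),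
    depolarize_diagonal q (by simp), mrpow, mrpow, matFun_diagonal, matFun_diagonal,
    diagonal_mul_diagonal, trace_diagonal, Fin.sum_univ_two]
  simp only [cons_val_zero, cons_val_one, binaryOverlap]
  norm_cast
  ring_nf

lemma renyiD_le_of_le_re_trace {n : Type*} [Fintype n] [DecidableEq n] {α t : ℝ} (hα : α < 1)
    (ht : 0 < t) {ρ σ : Matrix n n ℂ} (h : t ≤ (mrpow ρ α * mrpow σ (1 - α)).trace.re) :
    renyiD α ρ σ ≤ 1 / (α - 1) * Real.log t :=
  mul_le_mul_of_nonpos_left (Real.log_le_log ht h)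
    (div_nonpos_of_nonneg_of_nonpos zero_le_one (by linarith))

/-- for the qubit depolarizing channel `D_q`, and any `α ∈ (0,1)`,
`sup_{ρ,σ} D_α(D_q(ρ)‖D_q(σ)) = (1/(α−1))·log Q(q,α)`, attained at
`ρ = |0⟩⟨0|`, `σ = |1⟩⟨1|`. -/
theorem depolarizing_renyi_sup
    (q : ℝ) (hq : q ∈ Set.Ioo (0 : ℝ) 1)
    (Dq : Matrix (Fin 2) (Fin 2) ℂ → Matrix (Fin 2) (Fin 2) ℂ)
    (hDq : ∀ ρ, Dq ρ = ((1 - q : ℝ) : ℂ) • ρ +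
      ((q : ℝ) : ℂ) • (ρ.trace • ((1 / 2 : ℂ) • (1 : Matrix (Fin 2) (Fin 2) ℂ))))
    (Q : ℝ → ℝ → ℝ)
    (hQ : ∀ q' α, Q q' α = (1 - q' / 2) ^ α * (q' / 2) ^ (1 - α) +
      (1 - q' / 2) ^ (1 - α) * (q' / 2) ^ α)
    (α : ℝ) (hα : α ∈ Set.Ioo (0 : ℝ) 1) :
    IsGreatest {y : ℝ | ∃ ρ σ : Matrix (Fin 2) (Fin 2) ℂ,
        IsDensity ρ ∧ IsDensity σ ∧ y = renyiD α (Dq ρ) (Dq σ)}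
      ((1 / (α - 1)) * Real.log (Q q α)) ∧
    renyiD α (Dq !![1, 0; 0, 0]) (Dq !![0, 0; 0, 1]) =
      (1 / (α - 1)) * Real.log (Q q α) := by
  obtain ⟨hq₀, hq₁⟩ := hq
  obtain ⟨hα₀, hα₁⟩ := hα
  obtain rfl : Dq = depolarize q := funext hDq
  have hQ_eq : Q q α = binaryOverlap α (1 - q / 2) (q / 2) := by
    rw [hQ, binaryOverlap, sub_sub_cancel, mul_comm ((q / 2) ^ α)]
  have hQ_pos : 0 < Q q α := by
    have : 0 < 1 - q / 2 := by linarith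
    rw [hQ]
    positivity
  have hattain : renyiD α (depolarize q !![1, 0; 0, 0]) (depolarize q !![0, 0; 0, 1]) =
      1 / (α - 1) * Real.log (Q q α) := by
    rw [renyiD, re_trace_mrpow_depolarize_ket₀_mul_mrpow_depolarize_ket₁, hQ_eq]
  refine ⟨⟨⟨_, _, ket₀_eq_diagonal ▸ isDensity_diagonal (by simp [Fin.forall_fin_two]) (by simp),
    ket₁_eq_diagonal ▸ isDensity_diagonal (by simp [Fin.forall_fin_two]) (by simp),
    hattain.symm⟩, ?_⟩, hattain⟩
  rintro - ⟨ρ, σ, hρ, hσ, rfl⟩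
  exact renyiD_le_of_le_re_trace hα₁ hQ_pos <| hQ_eq ▸
    binaryOverlap_le_re_trace_mrpow_depolarize hq₀.le hq₁.le hα₀.le hα₁.le hρ hσ
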